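/- Performance difference lemma for discounted continuing MDPs: for any two stationary policies π and π', any reward function r bounded by r̄, and any state s, the full regret for using π instead of π' from s satisfies v_s(π'; r) - v_s(π; r) = (1/(1-γ)) · E[ρ_S(A, π; r)], where S ~ d_s(·; π') is drawn from the γ-discounted future state distribution induced by π' from s and A ~ π'(·|S). -/

import Mathlib

open scoped BigOperators
open MeasureTheory

/-- A finite discounted Markov decision process `(S, A, p, d_∅, γ)`. -/
structure MDP (S A : Type) [Fintype S] [Fintype A] [DecidableEq S] where
  /-- transition probabilities `p(s' | s, a)` -/
  p : S → A → S → ℝ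
  p_nonneg : ∀ s a s', 0 ≤ p s a s'
  p_sum_one : ∀ s a, ∑ s', p s a s' = 1
  /-- initial state distribution `d_∅` -/
  d0 : S → ℝ
  d0_nonneg : ∀ s, 0 ≤ d0 s
  d0_sum_one : ∑ s, d0 s = 1
  /-- discount factor `γ ∈ [0, 1)` -/
  γ : ℝ
  γ_nonneg : 0 ≤ γ
  γ_lt_one : γ < 1

/-- A stationary policy: a probability distribution `π(·|s)` over actions for each state. -/
structure Policy (S A : Type) [Fintype A] where
  prob : S → A → ℝ
  nonneg : ∀ s a, 0 ≤ prob s a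
  sum_one : ∀ s, ∑ a, prob s a = 1

variable {S A : Type} [Fintype S] [Fintype A] [DecidableEq S]

/-- Distribution of the state `S_i` at time `i` of the Markov chain induced by policy `π`
started at `S_0 = s`. -/
def MDP.stepDist (M : MDP S A) (π : Policy S A) (s : S) : ℕ → S → ℝ
  | 0 => fun s' => if s' = s then 1 else 0
  | i + 1 => fun s' => ∑ s₀ : S, ∑ a : A, M.stepDist π s i s₀ * π.prob s₀ a * M.p s₀ a s'

/-- Expected reward `E[r(S_i, A_{i+1}, S_{i+1})]` at step `i` of the chain induced by `π`
started at `S_0 = s`. -/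
def MDP.expReward (M : MDP S A) (π : Policy S A) (r : S → A → S → ℝ) (s : S) (i : ℕ) : ℝ :=
  ∑ s₀ : S, ∑ a : A, ∑ s' : S, M.stepDist π s i s₀ * π.prob s₀ a * M.p s₀ a s' * r s₀ a s'

/-- The normalized `γ`-discounted expected return
`v_s(π; r) = (1-γ) E[Σ_{i=0}^∞ γ^i r(S_i, A_{i+1}, S_{i+1})]`. -/
noncomputable def MDP.v (M : MDP S A) (π : Policy S A) (r : S → A → S → ℝ) (s : S) : ℝ :=
  (1 - M.γ) * ∑' i : ℕ, M.γ ^ i * M.expReward π r s i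

/-- Expected reward at step `i` of the chain started at `S_0 = s`, conditioned on `A_1 = a`,
following `π` thereafter. -/
def MDP.expRewardQ (M : MDP S A) (π : Policy S A) (r : S → A → S → ℝ) (s : S) (a : A) :
    ℕ → ℝ
  | 0 => ∑ s' : S, M.p s a s' * r s a s'
  | i + 1 => ∑ s' : S, M.p s a s' * M.expReward π r s' i

/-- The normalized `γ`-discounted expected return `q_s(a, π; r)` for taking action `a` in
state `s` and following `π` thereafter. -/
noncomputable def MDP.q (M : MDP S A) (π : Policy S A) (r : S → A → S → ℝ) (s : S) (a : A) :
    ℝ :=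
  (1 - M.γ) * ∑' i : ℕ, M.γ ^ i * M.expRewardQ π r s a i

/-- The (normalized) advantage `ρ_s(a, π; r) = q_s(a, π; r) - v_s(π; r)`. -/
noncomputable def MDP.adv (M : MDP S A) (π : Policy S A) (r : S → A → S → ℝ) (s : S)
    (a : A) : ℝ :=
  M.q π r s a - M.v π r s

/-- The normalized `γ`-discounted expected return from the initial state distribution,
`v_∅(π; r) = E_{S_0 ~ d_∅}[v_{S_0}(π; r)]`. -/
noncomputable def MDP.vInit (M : MDP S A) (π : Policy S A) (r : S → A → S → ℝ) : ℝ :=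
  ∑ s : S, M.d0 s * M.v π r s

/-- The `γ`-discounted future state distribution
`d_s(s'; π) = (1-γ) E[Σ_{i=0}^∞ γ^i 1[S_i = s']]` induced by `π` from `s`. -/
noncomputable def MDP.futureDist (M : MDP S A) (π : Policy S A) (s s' : S) : ℝ :=
  (1 - M.γ) * ∑' i : ℕ, M.γ ^ i * M.stepDist π s i s'

/-! Averaging the advantage of `π` over `π'(·|t)` leaves the one-step look-ahead
`(1-γ) E[r] + γ E[v_{S'}(π)] - v_t(π)`. Taken in expectation over the `i`-th state of the chain
driven by `π'`, the look-ahead value is the expectation of `v(π)` at step `i + 1`, so after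
discounting by `γ^i` the value terms telescope to `-v_s(π)` while the reward terms add up to
`v_s(π')`. -/

theorem tsum_sub_succ_eq_neg {f : ℕ → ℝ} (hf : Summable f) :
    ∑' i, (f (i + 1) - f i) = -f 0 := by
  rw [Summable.tsum_sub ((summable_nat_add_iff 1).mpr hf) hf, hf.tsum_eq_zero_add]
  ring

namespace MDP

variable (M : MDP S A) (π : Policy S A) (r : S → A → S → ℝ) (s : S)

theorem stepDist_nonneg (i : ℕ) (t : S) : 0 ≤ M.stepDist π s i t := by
  induction i generalizing t with
  | zero => simp only [stepDist]; split <;> norm_num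
  | succ i ih =>
    exact Finset.sum_nonneg fun t₀ _ => Finset.sum_nonneg fun a _ =>
      mul_nonneg (mul_nonneg (ih t₀) (π.nonneg _ _)) (M.p_nonneg _ _ _)

theorem sum_stepDist_succ_mul (i : ℕ) (g : S → ℝ) :
    ∑ t', M.stepDist π s (i + 1) t' * g t' =
      ∑ t, M.stepDist π s i t * ∑ a, π.prob t a * ∑ t', M.p t a t' * g t' := by
  simp only [stepDist, Finset.sum_mul, Finset.mul_sum]
  rw [Finset.sum_comm]
  refine Finset.sum_congr rfl fun t _ => ?_
  rw [Finset.sum_comm]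
  exact Finset.sum_congr rfl fun a _ => Finset.sum_congr rfl fun t' _ => by ring

theorem sum_stepDist_zero_mul (g : S → ℝ) : ∑ t, M.stepDist π s 0 t * g t = g s := by
  simp [stepDist]

theorem sum_stepDist (i : ℕ) : ∑ t, M.stepDist π s i t = 1 := by
  induction i with
  | zero => simpa using M.sum_stepDist_zero_mul π s (fun _ => 1)
  | succ i ih =>
    simpa [M.p_sum_one, π.sum_one, ih] using M.sum_stepDist_succ_mul π s i (fun _ => 1)

theorem stepDist_le_one (i : ℕ) (t : S) : M.stepDist π s i t ≤ 1 :=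
  M.sum_stepDist π s i ▸
    Finset.single_le_sum (fun t _ => M.stepDist_nonneg π s i t) (Finset.mem_univ t)

theorem summable_pow_mul_stepDist (t : S) :
    Summable fun i => M.γ ^ i * M.stepDist π s i t :=
  (summable_geometric_of_lt_one M.γ_nonneg M.γ_lt_one).of_nonneg_of_le
    (fun i => mul_nonneg (pow_nonneg M.γ_nonneg i) (M.stepDist_nonneg π s i t))
    (fun i => mul_le_of_le_one_right (pow_nonneg M.γ_nonneg i) (M.stepDist_le_one π s i t))

theorem summable_pow_mul_sum_stepDist_mul (g : S → ℝ) :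
    Summable fun i => M.γ ^ i * ∑ t, M.stepDist π s i t * g t := by
  simp only [Finset.mul_sum, ← mul_assoc]
  exact summable_sum fun t _ => (M.summable_pow_mul_stepDist π s t).mul_right (g t)

theorem expReward_eq_sum_stepDist_mul (i : ℕ) :
    M.expReward π r s i =
      ∑ t, M.stepDist π s i t * ∑ a, π.prob t a * ∑ t', M.p t a t' * r t a t' := by
  simp only [expReward, Finset.mul_sum]
  exact Finset.sum_congr rfl fun t _ => Finset.sum_congr rfl fun a _ =>
    Finset.sum_congr rfl fun t' _ => by ring

theorem summable_pow_mul_expReward : Summable fun i => M.γ ^ i * M.expReward π r s i := by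
  simpa only [M.expReward_eq_sum_stepDist_mul] using M.summable_pow_mul_sum_stepDist_mul π s _

theorem q_bellman (a : A) :
    M.q π r s a =
      (1 - M.γ) * ∑ t', M.p s a t' * r s a t' + M.γ * ∑ t', M.p s a t' * M.v π r t' := by
  have hsummable : ∀ t', Summable fun i => M.p s a t' * (M.γ ^ i * M.expReward π r t' i) :=
    fun t' => (M.summable_pow_mul_expReward π r t').mul_left (M.p s a t')
  have hterm : (fun i => M.γ ^ (i + 1) * M.expRewardQ π r s a (i + 1)) =
      fun i => M.γ * ∑ t', M.p s a t' * (M.γ ^ i * M.expReward π r t' i) := by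
    ext i
    simp only [expRewardQ, Finset.mul_sum]
    exact Finset.sum_congr rfl fun t' _ => by ring
  have htail : ∑' i, M.γ ^ (i + 1) * M.expRewardQ π r s a (i + 1) =
      M.γ * ∑ t', M.p s a t' * ∑' i, M.γ ^ i * M.expReward π r t' i := by
    rw [hterm, tsum_mul_left, Summable.tsum_finsetSum fun t' _ => hsummable t']
    simp only [tsum_mul_left]
  rw [q, tsum_eq_zero_add' (hterm ▸ (summable_sum fun t' _ => hsummable t').mul_left M.γ), htail]
  simp only [v, expRewardQ, pow_zero, one_mul, mul_left_comm (M.p s a _) (1 - M.γ),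
    ← Finset.mul_sum]
  ring

theorem sum_prob_mul_adv (π' : Policy S A) (t : S) :
    ∑ a, π'.prob t a * M.adv π r t a =
      (1 - M.γ) * ∑ a, π'.prob t a * ∑ t', M.p t a t' * r t a t' +
        M.γ * ∑ a, π'.prob t a * ∑ t', M.p t a t' * M.v π r t' - M.v π r t := by
  simp only [adv, q_bellman, mul_sub, Finset.sum_sub_distrib, ← Finset.sum_mul, π'.sum_one, one_mul,
    mul_add, Finset.sum_add_distrib, Finset.mul_sum]
  simp only [mul_left_comm (π'.prob t _)]

theorem sum_stepDist_mul_sum_prob_mul_adv (π' : Policy S A) (i : ℕ) :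
    ∑ t, M.stepDist π' s i t * ∑ a, π'.prob t a * M.adv π r t a =
      (1 - M.γ) * M.expReward π' r s i +
        M.γ * ∑ t, M.stepDist π' s (i + 1) t * M.v π r t -
          ∑ t, M.stepDist π' s i t * M.v π r t := by
  simp only [expReward_eq_sum_stepDist_mul, sum_stepDist_succ_mul, sum_prob_mul_adv, mul_sub,
    mul_add, Finset.sum_sub_distrib, Finset.sum_add_distrib, Finset.mul_sum]
  simp only [mul_left_comm (M.stepDist π' s i _)]

theorem sum_futureDist_mul (g : S → ℝ) :
    ∑ t, M.futureDist π s t * g t =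
      (1 - M.γ) * ∑' i, M.γ ^ i * ∑ t, M.stepDist π s i t * g t := by
  simp only [futureDist, Finset.mul_sum, ← mul_assoc]
  rw [Summable.tsum_finsetSum fun t _ => (M.summable_pow_mul_stepDist π s t).mul_right (g t),
    Finset.mul_sum]
  exact Finset.sum_congr rfl fun t _ => by rw [tsum_mul_right]; ring

end MDP

theorem performance_difference_general
    (M : MDP S A) (π π' : Policy S A)
    (r : S → A → S → ℝ) (s : S) :
    M.v π' r s - M.v π r s =
      (1 / (1 - M.γ)) *
        ∑ s' : S, M.futureDist π' s s' * ∑ a : A, π'.prob s' a * M.adv π r s' a := by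
  have hγ : 1 - M.γ ≠ 0 := (sub_pos.mpr M.γ_lt_one).ne'
  set b : ℕ → ℝ := fun i => M.γ ^ i * ∑ t, M.stepDist π' s i t * M.v π r t
  have hstep : ∀ i, M.γ ^ i * ∑ t, M.stepDist π' s i t * ∑ a, π'.prob t a * M.adv π r t a =
      (1 - M.γ) * (M.γ ^ i * M.expReward π' r s i) + (b (i + 1) - b i) := fun i => by
    rw [M.sum_stepDist_mul_sum_prob_mul_adv]
    ring
  have hb : Summable b := M.summable_pow_mul_sum_stepDist_mul π' s _
  rw [M.sum_futureDist_mul, tsum_congr hstep,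
    Summable.tsum_add ((M.summable_pow_mul_expReward π' r s).mul_left _)
      ((summable_nat_add_iff 1).mpr hb |>.sub hb),
    tsum_mul_left, tsum_sub_succ_eq_neg hb]
  simp only [b, pow_zero, one_mul, M.sum_stepDist_zero_mul]
  rw [one_div, inv_mul_cancel_left₀ hγ, sub_eq_add_neg, MDP.v]

/-- **Performance difference lemma** for discounted continuing MDPs:
`v_s(π'; r) - v_s(π; r) = (1/(1-γ)) · E_{S ~ d_s(·;π'), A ~ π'(·|S)}[ρ_S(A, π; r)]`. -/
theorem performance_difference
    (M : MDP S A) (π π' : Policy S A) (rbar : ℝ) (hrbar : 0 < rbar)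
    (r : S → A → S → ℝ) (hr : ∀ s a s', |r s a s'| ≤ rbar) (s : S) :
    M.v π' r s - M.v π r s =
      (1 / (1 - M.γ)) *
        ∑ s' : S, M.futureDist π' s s' * ∑ a : A, π'.prob s' a * M.adv π r s' a :=
  performance_difference_general M π π' r s
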